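/- Let f̄, ḡ ∈ ℝ[x,y,λ] with gcd(f̄, ḡ) = 1, and let a ∈ ℝ be such that the leading coefficients of f̄ and ḡ with respect to x and with respect to y do not vanish at λ = a, and the polynomials Res_x(f̄,ḡ) and Res_y(f̄,ḡ) do not vanish identically when λ = a is substituted. Then gcd(f̄(x,y,a), ḡ(x,y,a)) = 1. -/

import Mathlib

/-! `res` is Mathlib's `Polynomial.resultant`: its Sylvester matrix is the transpose of Mathlib's
with both index orders reversed. A common divisor `d` of the specialized polynomials divides
`u f + v g = Res_x(f̄, ḡ)(a)`, a nonzero constant, so `d` has degree `0` in `x`; after swapping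
`x` and `y` the same argument gives degree `0` in `y`, so `d` is a nonzero real constant. -/

open Polynomial

/-- The Sylvester matrix of two univariate polynomials. -/
noncomputable def sylvesterMat {R : Type*} [CommRing R] (p q : R[X]) :
    Matrix (Fin (q.natDegree + p.natDegree)) (Fin (q.natDegree + p.natDegree)) R :=
  Matrix.of fun i j =>
    if (i : ℕ) < q.natDegree then
      (if (i : ℕ) ≤ (j : ℕ) ∧ (j : ℕ) ≤ (i : ℕ) + p.natDegree then
        p.coeff (p.natDegree + (i : ℕ) - (j : ℕ)) else 0)
    else
      (if (i : ℕ) - q.natDegree ≤ (j : ℕ) ∧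
          (j : ℕ) ≤ ((i : ℕ) - q.natDegree) + q.natDegree then
        q.coeff (q.natDegree + ((i : ℕ) - q.natDegree) - (j : ℕ)) else 0)

/-- The resultant of two univariate polynomials, as the determinant of the
Sylvester matrix. -/
noncomputable def res {R : Type*} [CommRing R] (p q : R[X]) : R :=
  (sylvesterMat p q).det

/-- `h` is a gcd of `f` and `g` (well defined up to a unit). -/
def IsGCDOf {R : Type*} [CommRing R] (h f g : R) : Prop :=
  h ∣ f ∧ h ∣ g ∧ ∀ d : R, d ∣ f → d ∣ g → d ∣ h

/-- The ring `ℝ[x,y,λ]`, written as `((ℝ[λ])[y])[x]`: `x` is the outer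
variable, `y` the middle one and `λ` the inner one. -/
noncomputable abbrev R3 := Polynomial (Polynomial (Polynomial ℝ))

/-- The swap of the variables `x` and `y`, carrying `((ℝ[λ])[y])[x]` to
`((ℝ[λ])[x])[y]` (the same ring, with the roles of the two outer variables
exchanged). -/
noncomputable def pswap : R3 →+* R3 :=
  eval₂RingHom
    (eval₂RingHom ((Polynomial.C.comp Polynomial.C : Polynomial ℝ →+* R3))
      (Polynomial.X : R3))
    (Polynomial.C (Polynomial.X : Polynomial (Polynomial ℝ)))

/-- The specialization `λ := a`, from `ℝ[x,y,λ]` to `ℝ[x,y] = (ℝ[y])[x]`. -/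
noncomputable def specAt (a : ℝ) : R3 →+* Polynomial (Polynomial ℝ) :=
  mapRingHom (mapRingHom (evalRingHom a))

namespace Polynomial

theorem map_ne_zero_of_leadingCoeff_ne_zero {R S : Type*} [Semiring R] [Semiring S] (φ : R →+* S)
    {p : R[X]} (hp : φ p.leadingCoeff ≠ 0) : p.map φ ≠ 0 := fun h => hp (by
  rw [← leadingCoeff_map_of_leadingCoeff_ne_zero φ hp, h, leadingCoeff_zero])

variable {R S : Type*} [CommRing R] [CommRing S]

theorem sylvesterMat_eq_transpose_submatrix (p q : R[X]) :
    sylvesterMat p q = (sylvester p q p.natDegree q.natDegree).transpose.submatrix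
      (Fin.revPerm.trans (finCongr (add_comm _ _)))
      (Fin.revPerm.trans (finCongr (add_comm _ _))) := by
  ext i j
  simp only [sylvesterMat, sylvester, Matrix.of_apply, Matrix.submatrix_apply,
    Matrix.transpose_apply, Equiv.trans_apply, Fin.revPerm_apply, finCongr_apply, Fin.addCases,
    Set.mem_Icc, Fin.val_castLT, Fin.val_subNat, Fin.val_rev, Fin.val_cast, eq_rec_constant]
  have := i.isLt
  have := j.isLt
  split_ifs <;> first | rfl | omega | (congr 1; omega)

theorem res_eq_resultant (p q : R[X]) : res p q = resultant p q := by
  rw [res, sylvesterMat_eq_transpose_submatrix, Matrix.det_submatrix_equiv_self,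
    Matrix.det_transpose, resultant]

theorem natDegree_eq_zero_of_dvd_map_of_resultant_ne_zero [IsDomain S] (φ : R →+* S)
    {f g : R[X]} (hf : φ f.leadingCoeff ≠ 0) (hres : φ (resultant f g) ≠ 0) {d : S[X]}
    (hdf : d ∣ f.map φ) (hdg : d ∣ g.map φ) : d.natDegree = 0 := by
  by_cases hf₀ : f.natDegree = 0
  · have := natDegree_le_of_dvd hdf (map_ne_zero_of_leadingCoeff_ne_zero φ hf)
    rw [natDegree_map_of_leadingCoeff_ne_zero φ hf, hf₀] at this
    omega
  obtain ⟨u, v, -, -, huv⟩ := exists_mul_add_mul_eq_C_resultant (f.map φ) (g.map φ)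
    (natDegree_map_le (p := f)) (natDegree_map_le (p := g)) (Or.inl hf₀)
  rw [resultant_map_map] at huv
  have hd : d ∣ C (φ (resultant f g)) := huv ▸ dvd_add (hdf.mul_right u) (hdg.mul_right v)
  simpa using natDegree_le_of_dvd hd (C_ne_zero.mpr hres)

end Polynomial

open Polynomial.Bivariate

theorem specAt_pswap (a : ℝ) (F : R3) : specAt a (pswap F) = swap (specAt a F) := by
  suffices h : (specAt a).comp pswap =
      (swap : ℝ[X][X] ≃ₐ[ℝ] ℝ[X][X]).toRingHom.comp (specAt a) from RingHom.congr_fun h F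
  refine ringHom_ext' (ringHom_ext' (ringHom_ext' (RingHom.ext fun r => ?_) ?_) ?_) ?_ <;>
    simp [pswap, specAt, swap_C_C, swap_X, swap_Y]

theorem specialization_of_coprimality_general (fb gb : R3) (a : ℝ)
    (hlcx_f : (Polynomial.map (evalRingHom a) fb.leadingCoeff) ≠ 0)
    (hlcy_f : (Polynomial.map (evalRingHom a) (pswap fb).leadingCoeff) ≠ 0)
    (hresx : (Polynomial.map (evalRingHom a) (res fb gb)) ≠ 0)
    (hresy : (Polynomial.map (evalRingHom a) (res (pswap fb) (pswap gb))) ≠ 0) :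
    ∀ d : Polynomial (Polynomial ℝ), d ∣ specAt a fb → d ∣ specAt a gb → IsUnit d := by
  intro d hdf hdg
  rw [res_eq_resultant] at hresx hresy
  have hx : d.natDegree = 0 :=
    natDegree_eq_zero_of_dvd_map_of_resultant_ne_zero (mapRingHom (evalRingHom a)) hlcx_f hresx
      hdf hdg
  have hdf' : swap d ∣ specAt a (pswap fb) := by
    rw [specAt_pswap]; exact map_dvd (swap (R := ℝ)).toRingHom hdf
  have hdg' : swap d ∣ specAt a (pswap gb) := by
    rw [specAt_pswap]; exact map_dvd (swap (R := ℝ)).toRingHom hdg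
  have hy : (swap d).natDegree = 0 :=
    natDegree_eq_zero_of_dvd_map_of_resultant_ne_zero (mapRingHom (evalRingHom a)) hlcy_f hresy
      hdf' hdg'
  obtain ⟨c, rfl⟩ := natDegree_eq_zero.mp hx
  rw [swap_C, natDegree_map_eq_of_injective C_injective] at hy
  obtain ⟨r, rfl⟩ := natDegree_eq_zero.mp hy
  refine isUnit_C.mpr (isUnit_C.mpr (isUnit_iff_ne_zero.mpr ?_))
  rintro rfl
  exact map_ne_zero_of_leadingCoeff_ne_zero (mapRingHom (evalRingHom a)) hlcx_f
    (by simpa [specAt] using hdf)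

/-- if `gcd(f̄,ḡ) = 1` (i.e. every common divisor is a unit),
and `a ∈ ℝ` is such that the leading coefficients of `f̄` and `ḡ` with respect
to `x` and with respect to `y` do not vanish at `λ = a`, and the resultants
`Res_x(f̄,ḡ)`, `Res_y(f̄,ḡ)` do not vanish identically when `λ = a` is
substituted, then `gcd(f̄(x,y,a), ḡ(x,y,a)) = 1`. -/
theorem specialization_of_coprimality (fb gb : R3) (a : ℝ)
    (hgcd : ∀ d : R3, d ∣ fb → d ∣ gb → IsUnit d)
    (hlcx_f : (Polynomial.map (evalRingHom a) fb.leadingCoeff) ≠ 0)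
    (hlcx_g : (Polynomial.map (evalRingHom a) gb.leadingCoeff) ≠ 0)
    (hlcy_f : (Polynomial.map (evalRingHom a) (pswap fb).leadingCoeff) ≠ 0)
    (hlcy_g : (Polynomial.map (evalRingHom a) (pswap gb).leadingCoeff) ≠ 0)
    (hresx : (Polynomial.map (evalRingHom a) (res fb gb)) ≠ 0)
    (hresy : (Polynomial.map (evalRingHom a) (res (pswap fb) (pswap gb))) ≠ 0) :
    ∀ d : Polynomial (Polynomial ℝ), d ∣ specAt a fb → d ∣ specAt a gb → IsUnit d :=
  specialization_of_coprimality_general fb gb a hlcx_f hlcy_f hresx hresy
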